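/- The implicit Euler upwind scheme for pure advection with divergence-free discrete velocity satisfies a discrete maximum principle: if the cell concentrations at time step n satisfy 0 ≤ cᵢⁿ ≤ M for all cells i and all inflow boundary values are in [0, M], then the implicit update φᵢ|Ωᵢ|(cᵢ^{n+1} − cᵢⁿ)/Δt + Σ_j F_{ij}(c^{n+1}) = 0 with upwind fluxes F_{ij} has a unique solution with 0 ≤ cᵢ^{n+1} ≤ M for all i. -/

import Mathlib

/-!
Writing the scheme as `A c = b` with `A` the upwind system matrix, a maximum principle for
solutions comes from looking at a cell where `c` is largest: by discrete divergence-freeness the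
fluxes there rewrite as `Σ_j v_{ij}⁻ (c_j − c_i) + vb_i⁻ (cb_i − c_i)`, which is nonnegative once
`c_i` exceeds the boundary data, so the storage term forces `c_i ≤ cᵢⁿ`. Applied to the homogeneous
problem this makes `A` injective, hence invertible in finite dimension.
-/

open Finset

section UpwindScheme

variable {ι : Type*} [Fintype ι] (φ Vol : ι → ℝ) (Δt : ℝ) (v : ι → ι → ℝ) (vb : ι → ℝ)

noncomputable def upwindResidual (cb cn c : ι → ℝ) (i : ι) : ℝ :=
  φ i * Vol i * (c i - cn i) / Δt
    + (∑ j, (max (v i j) 0 * c i + min (v i j) 0 * c j))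
    + (max (vb i) 0 * c i + min (vb i) 0 * cb i)

noncomputable def upwindOperator : (ι → ℝ) →ₗ[ℝ] ι → ℝ :=
  LinearMap.pi fun i =>
    (φ i * Vol i / Δt + (∑ j, max (v i j) 0) + max (vb i) 0) • LinearMap.proj i
      + ∑ j, min (v i j) 0 • LinearMap.proj j

theorem upwindOperator_apply (c : ι → ℝ) (i : ι) :
    upwindOperator φ Vol Δt v vb c i
      = (φ i * Vol i / Δt + (∑ j, max (v i j) 0) + max (vb i) 0) * c i
        + ∑ j, min (v i j) 0 * c j := by
  simp [upwindOperator]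

theorem upwindResidual_eq_upwindOperator_sub (cb cn c : ι → ℝ) (i : ι) :
    upwindResidual φ Vol Δt v vb cb cn c i
      = upwindOperator φ Vol Δt v vb c i - (φ i * Vol i * cn i / Δt - min (vb i) 0 * cb i) := by
  rw [upwindOperator_apply, upwindResidual, sum_add_distrib, ← sum_mul]
  ring

theorem forall_upwindResidual_eq_zero_iff (cb cn c : ι → ℝ) :
    (∀ i, upwindResidual φ Vol Δt v vb cb cn c i = 0)
      ↔ upwindOperator φ Vol Δt v vb c
          = fun i => φ i * Vol i * cn i / Δt - min (vb i) 0 * cb i := by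
  simp only [upwindResidual_eq_upwindOperator_sub, sub_eq_zero, funext_iff]

theorem upwindResidual_neg (cb cn c : ι → ℝ) (i : ι) :
    upwindResidual φ Vol Δt v vb (-cb) (-cn) (-c) i = -upwindResidual φ Vol Δt v vb cb cn c i := by
  simp only [upwindResidual_eq_upwindOperator_sub, map_neg, Pi.neg_apply]
  ring

theorem upwindResidual_eq_of_sum_add_eq_zero (cb cn c : ι → ℝ) (i : ι)
    (hdiv : (∑ j, v i j) + vb i = 0) :
    upwindResidual φ Vol Δt v vb cb cn c i
      = φ i * Vol i * (c i - cn i) / Δt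
        + ∑ j, min (v i j) 0 * (c j - c i) + min (vb i) 0 * (cb i - c i) := by
  have hsplit : ∀ x y z : ℝ, max x 0 * y + min x 0 * z = x * y + min x 0 * (z - y) := by
    intro x y z
    linear_combination y * max_add_min x 0
  simp only [upwindResidual, hsplit, sum_add_distrib, ← sum_mul]
  linear_combination c i * hdiv

variable {φ Vol Δt v vb}

theorem le_of_forall_upwindResidual_eq_zero {U : ℝ} {cb cn c : ι → ℝ}
    (hφ : ∀ i, 0 < φ i) (hVol : ∀ i, 0 < Vol i) (hΔt : 0 < Δt)
    (hdiv : ∀ i, (∑ j, v i j) + vb i = 0)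
    (hcb : ∀ i, cb i ≤ U) (hcn : ∀ i, cn i ≤ U)
    (hc : ∀ i, upwindResidual φ Vol Δt v vb cb cn c i = 0) (i₀ : ι) :
    c i₀ ≤ U := by
  obtain ⟨i, -, hmax⟩ := exists_max_image univ c ⟨i₀, mem_univ _⟩
  have hmax : ∀ j, c j ≤ c i := fun j => hmax j (mem_univ _)
  refine (hmax i₀).trans (not_lt.mp fun hU => ?_)
  have hinner : 0 ≤ ∑ j, min (v i j) 0 * (c j - c i) :=
    sum_nonneg fun j _ => mul_nonneg_of_nonpos_of_nonpos (min_le_right _ _)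
      (sub_nonpos.mpr (hmax j))
  have hbdry : 0 ≤ min (vb i) 0 * (cb i - c i) :=
    mul_nonneg_of_nonpos_of_nonpos (min_le_right _ _) (by linarith [hcb i])
  have hstorage : 0 < φ i * Vol i * (c i - cn i) / Δt :=
    div_pos (mul_pos (mul_pos (hφ i) (hVol i)) (by linarith [hcn i])) hΔt
  have hres := hc i
  rw [upwindResidual_eq_of_sum_add_eq_zero φ Vol Δt v vb cb cn c i (hdiv i)] at hres
  linarith

theorem ge_of_forall_upwindResidual_eq_zero {L : ℝ} {cb cn c : ι → ℝ}
    (hφ : ∀ i, 0 < φ i) (hVol : ∀ i, 0 < Vol i) (hΔt : 0 < Δt)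
    (hdiv : ∀ i, (∑ j, v i j) + vb i = 0)
    (hcb : ∀ i, L ≤ cb i) (hcn : ∀ i, L ≤ cn i)
    (hc : ∀ i, upwindResidual φ Vol Δt v vb cb cn c i = 0) (i : ι) :
    L ≤ c i :=
  neg_le_neg_iff.mp <| le_of_forall_upwindResidual_eq_zero (cb := -cb) (cn := -cn) (c := -c)
    hφ hVol hΔt hdiv (fun j => neg_le_neg (hcb j)) (fun j => neg_le_neg (hcn j))
    (fun j => by rw [upwindResidual_neg, hc j, neg_zero]) i

theorem upwindOperator_injective
    (hφ : ∀ i, 0 < φ i) (hVol : ∀ i, 0 < Vol i) (hΔt : 0 < Δt)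
    (hdiv : ∀ i, (∑ j, v i j) + vb i = 0) :
    Function.Injective (upwindOperator φ Vol Δt v vb) := by
  refine (injective_iff_map_eq_zero _).mpr fun d hd => ?_
  have hd : ∀ i, upwindResidual φ Vol Δt v vb 0 0 d i = 0 :=
    (forall_upwindResidual_eq_zero_iff φ Vol Δt v vb 0 0 d).mpr (by simpa [funext_iff] using hd)
  funext i
  exact le_antisymm
    (le_of_forall_upwindResidual_eq_zero hφ hVol hΔt hdiv (fun _ => le_rfl) (fun _ => le_rfl) hd i)
    (ge_of_forall_upwindResidual_eq_zero hφ hVol hΔt hdiv (fun _ => le_rfl) (fun _ => le_rfl) hd i)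

end UpwindScheme

theorem implicit_upwind_maximum_principle_general
    {ι : Type*} [Fintype ι]
    (φ Vol : ι → ℝ) (Δt M : ℝ) (v : ι → ι → ℝ) (vb cb cn : ι → ℝ)
    (hφ : ∀ i, 0 < φ i) (hVol : ∀ i, 0 < Vol i) (hΔt : 0 < Δt)
    (hdivfree : ∀ i, (∑ j, v i j) + vb i = 0)
    (hcb : ∀ i, 0 ≤ cb i ∧ cb i ≤ M)
    (hcn : ∀ i, 0 ≤ cn i ∧ cn i ≤ M) :
    (∃! c : ι → ℝ, ∀ i,
        φ i * Vol i * (c i - cn i) / Δt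
          + (∑ j, (max (v i j) 0 * c i + min (v i j) 0 * c j))
          + (max (vb i) 0 * c i + min (vb i) 0 * cb i) = 0) ∧
    (∀ c : ι → ℝ,
      (∀ i,
        φ i * Vol i * (c i - cn i) / Δt
          + (∑ j, (max (v i j) 0 * c i + min (v i j) 0 * c j))
          + (max (vb i) 0 * c i + min (vb i) 0 * cb i) = 0) →
      ∀ i, 0 ≤ c i ∧ c i ≤ M) := by
  have hsolves := forall_upwindResidual_eq_zero_iff φ Vol Δt v vb cb cn
  have hinj := upwindOperator_injective hφ hVol hΔt hdivfree
  obtain ⟨c, hc⟩ := LinearMap.injective_iff_surjective.mp hinj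
    fun i => φ i * Vol i * cn i / Δt - min (vb i) 0 * cb i
  refine ⟨⟨c, (hsolves c).mpr hc, fun c' hc' => hinj (((hsolves c').mp hc').trans hc.symm)⟩,
    fun c' hc' i => ⟨?_, ?_⟩⟩
  · exact ge_of_forall_upwindResidual_eq_zero hφ hVol hΔt hdivfree (fun j => (hcb j).1)
      (fun j => (hcn j).1) hc' i
  · exact le_of_forall_upwindResidual_eq_zero hφ hVol hΔt hdivfree (fun j => (hcb j).2)
      (fun j => (hcn j).2) hc' i

/-- Discrete maximum principle for the implicit Euler, first-order upwind
finite-volume scheme for pure advection with divergence-free discrete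
velocity.  `ι` is the finite set of cells, with porosities `φ i > 0`, volumes
`Vol i > 0` and time step `Δt > 0`.  `v i j = −v j i` is the prescribed
signed flux from cell `i` to cell `j` and `vb i` the signed flux through the
boundary face of cell `i` (positive for outflow); the discrete velocity is
divergence free including boundary faces: `Σ_j v i j + vb i = 0`.  The upwind
interface flux is `F_{ij}(c) = v_{ij}⁺ c_i + v_{ij}⁻ c_j`, and inflow
boundary faces use the prescribed boundary concentration `cb i ∈ [0, M]` as
the upstream value.  If `0 ≤ cᵢⁿ ≤ M` for all cells, then the implicit update
`φᵢ |Ωᵢ| (cᵢ^{n+1} − cᵢⁿ)/Δt + Σ_j F_{ij}(c^{n+1}) = 0` (with boundary flux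
included) has a unique solution `c^{n+1}`, and it satisfies
`0 ≤ cᵢ^{n+1} ≤ M` for all `i`. -/
theorem implicit_upwind_maximum_principle
    {ι : Type*} [Fintype ι] [DecidableEq ι]
    (φ Vol : ι → ℝ) (Δt M : ℝ) (v : ι → ι → ℝ) (vb cb cn : ι → ℝ)
    (hφ : ∀ i, 0 < φ i) (hVol : ∀ i, 0 < Vol i) (hΔt : 0 < Δt) (hM : 0 ≤ M)
    (hanti : ∀ i j, v i j = -v j i)
    (hdivfree : ∀ i, (∑ j, v i j) + vb i = 0)
    (hcb : ∀ i, 0 ≤ cb i ∧ cb i ≤ M)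
    (hcn : ∀ i, 0 ≤ cn i ∧ cn i ≤ M) :
    (∃! c : ι → ℝ, ∀ i,
        φ i * Vol i * (c i - cn i) / Δt
          + (∑ j, (max (v i j) 0 * c i + min (v i j) 0 * c j))
          + (max (vb i) 0 * c i + min (vb i) 0 * cb i) = 0) ∧
    (∀ c : ι → ℝ,
      (∀ i,
        φ i * Vol i * (c i - cn i) / Δt
          + (∑ j, (max (v i j) 0 * c i + min (v i j) 0 * c j))
          + (max (vb i) 0 * c i + min (vb i) 0 * cb i) = 0) →
      ∀ i, 0 ≤ c i ∧ c i ≤ M) :=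
  implicit_upwind_maximum_principle_general φ Vol Δt M v vb cb cn hφ hVol hΔt hdivfree hcb hcn
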